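/- arXiv:1809.08762 — 2 statements merged into one kernel-verified Lean document; each statement's English description precedes it below -/
import Mathlib

section
/- Let A and B be groups and let G = A ∗ B be their free product, with A regarded as a subgroup of G via the canonical embedding. If a ∈ A and g ∈ G with g ∉ A and g a g⁻¹ ∈ A, then a = 1. Equivalently, A ∩ g⁻¹Ag = {1} for every g ∈ G \ A. -/
/-! Write `g ∉ A` as `g = s * w * t` with `s, t ∈ A` and `w` a nonempty reduced word whose first
and last letters lie outside `A`, by stripping `A`-letters off both ends of the normal form of `g`.
For `a ≠ 1` we get `g * a * g⁻¹ = s * (w * a' * w⁻¹) * s⁻¹` with `a' = t * a * t⁻¹ ≠ 1`, and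
`w * a' * w⁻¹` is a reduced word ending outside `A`, so by uniqueness of normal forms it is not
in `A`. -/

namespace Monoid.CoprodI

variable {ι : Type*}

namespace NeWord

section Monoid

variable {M : ι → Type*} [∀ i, Monoid (M i)]

theorem prod_ne_one {i j : ι} (w : NeWord M i j) : w.prod ≠ 1 := by
  classical
  intro h
  have : w.toWord = Word.empty := Word.equiv.symm.injective (h.trans Word.prod_empty.symm)
  exact w.toList_ne_nil (congrArg Word.toList this)

theorem prod_eq_of_head_or_exists_tail {i k : ι} (w : NeWord M i k) :
    (k = i ∧ w.prod = of w.head) ∨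
      ∃ j ≠ i, ∃ w' : NeWord M j k, w.prod = of w.head * w'.prod := by
  induction w with
  | singleton x hx => exact .inl ⟨rfl, prod_singleton x hx⟩
  | append w₁ hne w₂ ih₁ _ =>
    rw [append_prod, append_head]
    rcases ih₁ with ⟨rfl, h₁⟩ | ⟨j, hj, w₁', h₁⟩
    · exact .inr ⟨_, hne.symm, w₂, by rw [h₁]⟩
    · exact .inr ⟨j, hj, append w₁' hne w₂, by rw [h₁, append_prod, mul_assoc]⟩

theorem exists_prod_eq_of_mul_prod {i j k : ι} (w : NeWord M j k)
    (hw : w.prod ∉ MonoidHom.mrange (of : M i →* CoprodI M)) :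
    ∃ j' ≠ i, ∃ (w' : NeWord M j' k) (s : M i), w.prod = of s * w'.prod := by
  by_cases hj : j = i
  · subst hj
    rcases w.prod_eq_of_head_or_exists_tail with ⟨-, h⟩ | ⟨j', hj', w', h⟩
    · exact absurd ⟨w.head, h.symm⟩ hw
    · exact ⟨j', hj', w', w.head, h⟩
  · exact ⟨j, hj, w, 1, by rw [map_one, one_mul]⟩

end Monoid

variable {G : ι → Type*} [∀ i, Group (G i)]

theorem prod_notMem_range {i j k : ι} (w : NeWord G j k) (hk : k ≠ i) :
    w.prod ∉ (of : G i →* CoprodI G).range := by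
  rintro ⟨b, hb⟩
  by_cases hb1 : b = 1
  · exact w.prod_ne_one (by rw [← hb, hb1, map_one])
  · refine (w.append hk (singleton b⁻¹ (inv_ne_one.2 hb1))).prod_ne_one ?_
    rw [append_prod, prod_singleton, ← hb, ← map_mul, mul_inv_cancel, map_one]

end NeWord

variable {G : ι → Type*} [∀ i, Group (G i)]

theorem exists_eq_of_mul_prod_mul {i : ι} {g : CoprodI G}
    (hg : g ∉ (of : G i →* CoprodI G).range) :
    ∃ (j k : ι) (w : NeWord G j k) (s t : G i), j ≠ i ∧ k ≠ i ∧ g = of s * w.prod * of t := by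
  classical
  have hg1 : Word.equiv g ≠ Word.empty := fun h =>
    hg ⟨1, by rw [map_one, ← Word.equiv.symm_apply_apply g, h]; rfl⟩
  obtain ⟨j₀, k₀, w₀, hw₀⟩ := NeWord.of_word _ hg1
  have hgw₀ : w₀.prod = g := by
    rw [NeWord.prod, hw₀]; exact Word.equiv.symm_apply_apply g
  obtain ⟨j, hj, w₁, s, h₁⟩ := w₀.exists_prod_eq_of_mul_prod (hgw₀ ▸ hg)
  have hw₁ : w₁.inv.prod ∉ (of : G i →* CoprodI G).range := by
    rintro ⟨x, hx⟩
    refine hg ⟨s * x⁻¹, ?_⟩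
    rw [← hgw₀, h₁, map_mul, map_inv, hx, NeWord.inv_prod, inv_inv]
  -- the last letter is stripped as the first letter of the inverse word
  obtain ⟨k, hk, w₂, t, h₂⟩ := w₁.inv.exists_prod_eq_of_mul_prod hw₁
  refine ⟨j, k, w₂.inv, s, t⁻¹, hj, hk, ?_⟩
  rw [← hgw₀, h₁, ← inv_inv w₁.prod, ← NeWord.inv_prod, h₂, NeWord.inv_prod, map_inv,
    mul_inv_rev, mul_assoc]

theorem eq_one_of_conj_mem_range {i : ι} {a : G i} {g : CoprodI G}
    (hg : g ∉ (of : G i →* CoprodI G).range)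
    (ha : g * of a * g⁻¹ ∈ (of : G i →* CoprodI G).range) : a = 1 := by
  by_contra ha1
  obtain ⟨j, k, w, s, t, hj, hk, rfl⟩ := exists_eq_of_mul_prod_mul hg
  obtain ⟨b, hb⟩ := ha
  have ha' : t * a * t⁻¹ ≠ 1 := mt conj_eq_one_iff.1 ha1
  let u := (w.append hk (NeWord.singleton _ ha')).append hk.symm w.inv
  refine u.prod_notMem_range hj ⟨s⁻¹ * b * s, ?_⟩
  simp only [u, NeWord.append_prod, NeWord.prod_singleton, NeWord.inv_prod, map_mul, map_inv, hb]
  group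

end Monoid.CoprodI

namespace Monoid.Coprod

open CoprodI

universe u v

variable (A : Type u) (B : Type v) [Group A] [Group B]

/-- The family `A, B` indexed by `Bool`, lifted to a common universe. -/
abbrev boolFamily : Bool → Type max u v := fun b => cond b (ULift.{v} A) (ULift.{u} B)

instance : ∀ b, Group (boolFamily A B b)
  | true => ULift.group
  | false => ULift.group

def equivCoprodI : A ∗ B ≃* CoprodI (boolFamily A B) :=
  MonoidHom.toMulEquiv
    (lift ((of (i := true)).comp MulEquiv.ulift.symm.toMonoidHom)
      ((of (i := false)).comp MulEquiv.ulift.symm.toMonoidHom))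
    (CoprodI.lift fun
      | true => inl.comp MulEquiv.ulift.toMonoidHom
      | false => inr.comp MulEquiv.ulift.toMonoidHom)
    (hom_ext rfl rfl)
    (CoprodI.ext_hom _ _ fun
      | true => rfl
      | false => rfl)

variable {A B}

theorem equivCoprodI_inl (x : A) : equivCoprodI A B (inl x) = of (i := true) (ULift.up x) := rfl

theorem equivCoprodI_mem_range_of_iff (y : A ∗ B) :
    equivCoprodI A B y ∈ (of : boolFamily A B true →* _).range ↔
      y ∈ (inl : A →* A ∗ B).range := by
  constructor
  · rintro ⟨x, hx⟩
    exact ⟨x.down, (equivCoprodI A B).injective (hx ▸ rfl)⟩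
  · rintro ⟨x, rfl⟩
    exact ⟨ULift.up x, rfl⟩

end Monoid.Coprod

/-- **Malnormality of a factor of a free product.**
Let `A` and `B` be groups and let `G = A ∗ B` be their free product, with `A` regarded as
a subgroup of `G` via the canonical embedding. If `a ∈ A` and `g ∈ G` with `g ∉ A` and
`g * a * g⁻¹ ∈ A`, then `a = 1`. -/
theorem coprod_conj_mem_inl_range {A B : Type*} [Group A] [Group B]
    (a : A) (g : Monoid.Coprod A B)
    (hg : g ∉ MonoidHom.range (Monoid.Coprod.inl : A →* Monoid.Coprod A B))
    (ha : g * Monoid.Coprod.inl a * g⁻¹ ∈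
      MonoidHom.range (Monoid.Coprod.inl : A →* Monoid.Coprod A B)) :
    a = 1 := by
  rw [← Monoid.Coprod.equivCoprodI_mem_range_of_iff] at hg ha
  rw [map_mul, map_mul, map_inv, Monoid.Coprod.equivCoprodI_inl] at ha
  exact congrArg ULift.down (Monoid.CoprodI.eq_one_of_conj_mem_range hg ha)
end

section
/- Let {G_i}_{i∈I} be a family of groups and let G = ∗_{i∈I} G_i be their free product, with each G_i regarded as a subgroup of G via the canonical embedding. Let N_i be a normal subgroup of G_i for each i, let ⟪N⟫ be the normal closure in G of the subgroup generated by all N_i, let Q = G/⟪N⟫, and let Q_i = G_i/N_i, each identified with a subgroup of Q via the (injective) natural homomorphism. Then there is an isomorphism of ℤQ-modules Rel(G, ⟪N⟫) ≅ ⨁_{i∈I} (ℤQ ⊗_{ℤQ_i} Rel(G_i, N_i)). -/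
open scoped TensorProduct DirectSum

/-- The `ℤQ`-submodule of relations defining the induced module
`ℤQ ⊗_{ℤR} Rel(A, N)` (where `R = A/N` maps to `Q` via the homomorphism induced by `f`)
as a quotient of `ℤQ ⊗_ℤ Rel(A, N)`; here `Rel(A, N)` is the abelianization of `N`,
on which `h ∈ A` acts by conjugation. -/
noncomputable def relSub (Q : Type*) [Group Q] (A : Type*) [Group A]
    (N : Subgroup A) [N.Normal] (f : A →* Q) :
    Submodule (MonoidAlgebra ℤ Q)
      (MonoidAlgebra ℤ Q ⊗[ℤ] Additive (Abelianization ↥N)) :=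
  Submodule.span (MonoidAlgebra ℤ Q)
    {x | ∃ (a : MonoidAlgebra ℤ Q) (h : A) (m : Additive (Abelianization ↥N)),
      x = (a * MonoidAlgebra.of ℤ Q (f h)) ⊗ₜ[ℤ] m -
        a ⊗ₜ[ℤ] Additive.ofMul ((Abelianization.map (MulAut.conjNormal h).toMonoidHom)
          (Additive.toMul m))}

/-- `Rel(G, K)` (the abelianization of `K`, with the `Q = G/K` action induced by
conjugation) is isomorphic, as a `ℤQ`-module, to the direct sum over `i` of the induced
modules `ℤQ ⊗_{ℤR_i} Rel(A i, N i)`: there is an additive isomorphism which intertwines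
the conjugation action of `G` (inducing the `Q`-action on the left) with multiplication
by group elements of `Q` in the group ring (the `Q`-action on the right). -/
noncomputable def RelModuleIsoIndFam (G : Type*) [Group G] {ι : Type*} {A : ι → Type*}
    [∀ i, Group (A i)] (f : ∀ i, A i →* G) (N : ∀ i, Subgroup (A i)) [∀ i, (N i).Normal]
    (K : Subgroup G) [K.Normal] : Prop :=
  ∃ e : Additive (Abelianization ↥K) ≃+
      (⨁ i, ((MonoidAlgebra ℤ (G ⧸ K) ⊗[ℤ] Additive (Abelianization ↥(N i))) ⧸
        relSub (G ⧸ K) (A i) (N i) ((QuotientGroup.mk' K).comp (f i)))),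
    ∀ (g : G) (x : Additive (Abelianization ↥K)),
      e (Additive.ofMul ((Abelianization.map (MulAut.conjNormal g).toMonoidHom)
          (Additive.toMul x))) =
        MonoidAlgebra.of ℤ (G ⧸ K) (QuotientGroup.mk g) • e x

/-!
Write `K = ⟪N⟫`, `Q = G/K` and `Mᵢ = ℤQ ⊗_{ℤQᵢ} Rel(Gᵢ, Nᵢ)`. The map `⨁ Mᵢ → Rel(G, K)`
sends `q ⊗ n` to the class of `g n g⁻¹` for any lift `g` of `q`; it is well defined and
`Q`-equivariant because conjugation by `K` acts trivially on `Kᵃᵇ`. For the inverse, the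
equality `Gᵢ ∩ K = Nᵢ` (via the retraction `G → ∗ Gᵢ/Nᵢ`) identifies `Qᵢ` with a subgroup
of `Q`, and a choice of coset representatives for `Q/Qᵢ` gives a 1-cocycle of `Gᵢ` with values
in the coinduced module `Q → ⨁ Mⱼ`, i.e. a homomorphism `Gᵢ → (Q → ⨁ Mⱼ) ⋊ Q`. By the
universal property of the free product these assemble to `G → (Q → ⨁ Mⱼ) ⋊ Q`; on `K` the
second component vanishes, and evaluating the first at `1 ∈ Q` gives a homomorphism
`Kᵃᵇ → ⨁ Mⱼ` sending the class of `g n g⁻¹` to `ḡ ⊗ n`. Both composites are the identity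
on generators.
-/

namespace MonoidAlgebra

variable {Q M B : Type*} [Monoid Q] [AddCommGroup M] [AddCommGroup B]

noncomputable def tensorLift (φ : Q → M →+ B) : MonoidAlgebra ℤ Q ⊗[ℤ] M →+ B :=
  (TensorProduct.lift ((basis Q ℤ).constr ℤ fun q => (φ q).toIntLinearMap)).toAddMonoidHom

lemma tensorLift_of_tmul (φ : Q → M →+ B) (q : Q) (m : M) :
    tensorLift φ (of ℤ Q q ⊗ₜ m) = φ q m := by
  rw [tensorLift, LinearMap.toAddMonoidHom_coe, TensorProduct.lift.tmul, of_apply,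
    ← basis_apply, Module.Basis.constr_basis]
  rfl

end MonoidAlgebra

namespace Abelianization

variable {G : Type*} [Group G] {K : Subgroup G} [K.Normal]

abbrev conjNormal (g : G) : Abelianization K →* Abelianization K :=
  map (MulAut.conjNormal g).toMonoidHom

lemma conjNormal_mul (g h : G) :
    conjNormal (K := K) (g * h) = (conjNormal g).comp (conjNormal h) := by
  rw [conjNormal, map_mul, map_comp]
  rfl

lemma conjNormal_of_mem {k : G} (hk : k ∈ K) : conjNormal (K := K) k = MonoidHom.id _ := by
  refine hom_ext _ _ (MonoidHom.ext fun x => ?_)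
  have hx : MulAut.conjNormal k x = ⟨k, hk⟩ * x * (⟨k, hk⟩ : K)⁻¹ :=
    Subtype.ext (MulAut.conjNormal_apply k x)
  simp [hx]

lemma conjNormal_eq_of_mk_eq {g₁ g₂ : G} (h : (g₁ : G ⧸ K) = g₂) :
    conjNormal (K := K) g₁ = conjNormal g₂ := by
  rw [← mul_inv_cancel_left g₁ g₂, conjNormal_mul, conjNormal_of_mem (QuotientGroup.eq.mp h)]
  rfl

end Abelianization

lemma Subgroup.normalClosure_hom_ext {G M : Type*} [Group G] [Monoid M] {s : Set G}
    {f g : normalClosure s →* M}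
    (h : ∀ (c x : G) (hx : x ∈ s),
      f ⟨c * x * c⁻¹, normalClosure_normal.conj_mem x (subset_normalClosure hx) c⟩ =
        g ⟨c * x * c⁻¹, normalClosure_normal.conj_mem x (subset_normalClosure hx) c⟩) :
    f = g := by
  refine MonoidHom.eq_of_eqOn_dense (closure_closure_coe_preimage (k := Group.conjugatesOfSet s))
    fun ⟨k, _⟩ hk => ?_
  obtain ⟨x, hx, hconj⟩ := Group.mem_conjugatesOfSet_iff.1 hk
  obtain ⟨c, rfl⟩ := isConj_iff.1 hconj
  exact h c x hx

namespace MonoidHom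

variable {Q A : Type*} [Group Q] [Group A] (f : A →* Q)

def restrictSubgroups {N : Subgroup A} {K : Subgroup Q} (hf : ∀ n ∈ N, f n ∈ K) : N →* K :=
  (f.comp N.subtype).codRestrict K fun n => hf n n.2

noncomputable def cosetRep (q : Q) : Q := (q : Q ⧸ f.range).out

lemma exists_cosetRep_mul_eq (q : Q) : ∃ a : A, f.cosetRep q * f a = q := by
  obtain ⟨a, ha⟩ := QuotientGroup.eq.mp (QuotientGroup.out_eq' (q : Q ⧸ f.range))
  exact ⟨a, by rw [ha]; exact mul_inv_cancel_left _ q⟩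

noncomputable def cosetOffset (q : Q) : A := (f.exists_cosetRep_mul_eq q).choose

lemma cosetRep_mul_cosetOffset (q : Q) : f.cosetRep q * f (f.cosetOffset q) = q :=
  (f.exists_cosetRep_mul_eq q).choose_spec

lemma cosetRep_mul_apply (q : Q) (h : A) : f.cosetRep (q * f h) = f.cosetRep q := by
  rw [cosetRep, cosetRep, QuotientGroup.mk_mul_of_mem q (f.mem_range.2 ⟨h, rfl⟩)]

lemma cosetOffset_mul_mem {N : Subgroup A} (hf : f.ker = N) (q : Q) (g : A) :
    f.cosetOffset q * g * (f.cosetOffset (q * f g))⁻¹ ∈ N := by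
  have h₁ := eq_inv_mul_of_mul_eq (f.cosetRep_mul_cosetOffset q)
  have h₂ := eq_inv_mul_of_mul_eq (f.cosetRep_mul_cosetOffset (q * f g))
  rw [← hf, mem_ker, map_mul, map_mul, map_inv, h₁, h₂, cosetRep_mul_apply]
  group

end MonoidHom

abbrev IndRel (Q : Type*) [Group Q] (A : Type*) [Group A] (N : Subgroup A) [N.Normal]
    (f : A →* Q) :=
  (MonoidAlgebra ℤ Q ⊗[ℤ] Additive (Abelianization N)) ⧸ relSub Q A N f

-- Instance search does not see through `IndRel` under binders (as in `⨁ i, IndRel …`).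
noncomputable instance {Q A : Type*} [Group Q] [Group A] {N : Subgroup A} [N.Normal]
    {f : A →* Q} : AddCommGroup (IndRel Q A N f) :=
  Submodule.Quotient.addCommGroup _

noncomputable instance {Q A : Type*} [Group Q] [Group A] {N : Subgroup A} [N.Normal]
    {f : A →* Q} : Module (MonoidAlgebra ℤ Q) (IndRel Q A N f) :=
  Submodule.Quotient.module _

namespace IndRel

open Abelianization

section Generators

variable {Q A : Type*} [Group Q] [Group A] {N : Subgroup A} [N.Normal] (f : A →* Q)

noncomputable def mk (q : Q) (n : N) : IndRel Q A N f :=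
  Submodule.Quotient.mk (MonoidAlgebra.of ℤ Q q ⊗ₜ Additive.ofMul (Abelianization.of n))

lemma mk_mul (q : Q) (n m : N) : mk f q (n * m) = mk f q n + mk f q m := by
  simp [mk, TensorProduct.tmul_add]

lemma mk_mul_apply (q : Q) (h : A) (n : N) :
    mk f (q * f h) n = mk f q (MulAut.conjNormal h n) := by
  rw [mk, mk, Submodule.Quotient.eq, map_mul]
  exact Submodule.subset_span ⟨_, h, _, rfl⟩

lemma of_smul_mk (p q : Q) (n : N) :
    MonoidAlgebra.of ℤ Q p • mk f q n = mk f (p * q) n := by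
  rw [mk, mk, ← Submodule.Quotient.mk_smul, TensorProduct.smul_tmul', smul_eq_mul, map_mul]

variable {f}

lemma addHom_ext {B : Type*} [AddCommGroup B] {F F' : IndRel Q A N f →+ B}
    (h : ∀ q n, F (mk f q n) = F' (mk f q n)) : F = F' := by
  ext x
  obtain ⟨t, rfl⟩ := Submodule.Quotient.mk_surjective _ x
  induction t using TensorProduct.induction_on with
  | zero => simp only [Submodule.Quotient.mk_zero, map_zero]
  | add x y hx hy => simp only [Submodule.Quotient.mk_add, map_add, hx, hy]
  | tmul a m =>
    induction a using MonoidAlgebra.induction_on generalizing m with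
    | of q =>
      induction m using Additive.rec with | _ m =>
      induction m using QuotientGroup.induction_on with | H n =>
      exact h q n
    | add a b ha hb =>
      simp only [TensorProduct.add_tmul, Submodule.Quotient.mk_add, map_add, ha, hb]
    | smul r a ha => rw [TensorProduct.smul_tmul]; exact ha _

end Generators

section Lift

variable {Q A B : Type*} [Group Q] [Group A] [AddCommGroup B] {N : Subgroup A} [N.Normal]
  {f : A →* Q} (φ : Q → Additive (Abelianization N) →+ B)
  (hφ : ∀ q h m, φ (q * f h) m = φ q (Additive.ofMul (conjNormal h m.toMul)))
include hφ

lemma tensorLift_mul_of_tmul (a : MonoidAlgebra ℤ Q) (h : A) (m : Additive (Abelianization N)) :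
    MonoidAlgebra.tensorLift φ ((a * MonoidAlgebra.of ℤ Q (f h)) ⊗ₜ m) =
      MonoidAlgebra.tensorLift φ (a ⊗ₜ Additive.ofMul (conjNormal h m.toMul)) := by
  induction a using MonoidAlgebra.induction_on with
  | of q =>
    rw [← map_mul, MonoidAlgebra.tensorLift_of_tmul, MonoidAlgebra.tensorLift_of_tmul, hφ]
  | add a b ha hb => simp only [add_mul, TensorProduct.add_tmul, map_add, ha, hb]
  | smul r a ha =>
    rw [smul_mul_assoc, ← TensorProduct.smul_tmul', ← TensorProduct.smul_tmul', map_zsmul,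
      map_zsmul, ha]

lemma tensorLift_eq_zero {x} (hx : x ∈ relSub Q A N f) : MonoidAlgebra.tensorLift φ x = 0 := by
  suffices ∀ r : MonoidAlgebra ℤ Q, MonoidAlgebra.tensorLift φ (r • x) = 0 by
    simpa using this 1
  induction hx using Submodule.span_induction with
  | mem x hx =>
    obtain ⟨a, h, m, rfl⟩ := hx
    intro r
    rw [smul_sub, TensorProduct.smul_tmul', TensorProduct.smul_tmul', smul_eq_mul, smul_eq_mul,
      ← mul_assoc, map_sub, tensorLift_mul_of_tmul φ hφ, sub_self]
  | zero => simp
  | add x y _ _ hx hy => intro r; rw [smul_add, map_add, hx, hy, add_zero]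
  | smul s x _ hx => intro r; rw [smul_smul]; exact hx _

noncomputable def lift : IndRel Q A N f →+ B :=
  QuotientAddGroup.lift (relSub Q A N f).toAddSubgroup
    (MonoidAlgebra.tensorLift φ) fun _ hx => tensorLift_eq_zero φ hφ hx

lemma lift_mk (q : Q) (n : N) :
    lift φ hφ (mk f q n) = φ q (Additive.ofMul (Abelianization.of n)) :=
  MonoidAlgebra.tensorLift_of_tmul φ q _

end Lift

section ToRel

variable {G A : Type*} [Group G] [Group A] {K : Subgroup G} [K.Normal] {N : Subgroup A}
  [N.Normal] {f : A →* G} (hf : ∀ n ∈ N, f n ∈ K)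

lemma map_restrictSubgroups_comp_conjNormal (h : A) :
    (map (f.restrictSubgroups hf)).comp (conjNormal h) =
      (conjNormal (f h)).comp (map (f.restrictSubgroups hf)) := by
  simp only [conjNormal, map_comp]
  congr 1
  ext n
  change f ↑(MulAut.conjNormal h n) = f h * f n * (f h)⁻¹
  simp [MulAut.conjNormal_apply]

noncomputable def toRel :
    IndRel (G ⧸ K) A N ((QuotientGroup.mk' K).comp f) →+ Additive (Abelianization K) :=
  lift (fun q => ((conjNormal q.out).comp (map (f.restrictSubgroups hf))).toAdditive)
    fun q h m => by
      have hq : ((q * f h : G ⧸ K).out : G ⧸ K) = q.out * f h := by simp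
      simp only [MonoidHom.comp_apply, QuotientGroup.mk'_apply]
      rw [conjNormal_eq_of_mk_eq hq, conjNormal_mul, MonoidHom.comp_assoc,
        ← map_restrictSubgroups_comp_conjNormal hf]
      rfl

lemma toRel_mk (g : G) (n : N) :
    toRel hf (mk _ g n) = Additive.ofMul (conjNormal g (of (f.restrictSubgroups hf n))) := by
  rw [toRel, lift_mk, conjNormal_eq_of_mk_eq (QuotientGroup.out_eq' (g : G ⧸ K))]
  rfl

lemma toRel_of_smul (g : G) (x : IndRel (G ⧸ K) A N ((QuotientGroup.mk' K).comp f)) :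
    toRel hf (MonoidAlgebra.of ℤ (G ⧸ K) g • x) =
      Additive.ofMul (conjNormal g (toRel hf x).toMul) := by
  suffices (toRel hf).comp (DistribSMul.toAddMonoidHom _ (MonoidAlgebra.of ℤ (G ⧸ K) g)) =
      (conjNormal g).toAdditive.comp (toRel hf) from DFunLike.congr_fun this x
  refine addHom_ext fun q n => ?_
  induction q using QuotientGroup.induction_on with | H g' =>
  simp only [AddMonoidHom.comp_apply, DistribSMul.toAddMonoidHom_apply, of_smul_mk]
  rw [← QuotientGroup.mk_mul, toRel_mk, toRel_mk, conjNormal_mul]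
  rfl

end ToRel

section Cocycle

variable {Q A : Type*} [Group Q] [Group A] {N : Subgroup A} [N.Normal] {f : A →* Q}
  (hf : f.ker = N)

noncomputable def cocycle (q : Q) (g : A) : IndRel Q A N f :=
  mk f (f.cosetRep q)
    ⟨f.cosetOffset q * g * (f.cosetOffset (q * f g))⁻¹, f.cosetOffset_mul_mem hf q g⟩

lemma cocycle_mul (q : Q) (h g : A) :
    cocycle hf q (h * g) = cocycle hf q h + cocycle hf (q * f h) g := by
  rw [cocycle, cocycle, cocycle, f.cosetRep_mul_apply, ← mk_mul]
  congr 1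
  ext
  simp only [map_mul, mul_assoc, Subgroup.coe_mul]
  group

lemma cocycle_of_mem (q : Q) (n : N) : cocycle hf q n = mk f q n := by
  have hn : f n = 1 := by rw [← MonoidHom.mem_ker, hf]; exact n.2
  have : (⟨_, f.cosetOffset_mul_mem hf q n⟩ : N) = MulAut.conjNormal (f.cosetOffset q) n := by
    ext
    simp [hn, MulAut.conjNormal_apply]
  rw [cocycle, this, ← mk_mul_apply, f.cosetRep_mul_cosetOffset]

end Cocycle

end IndRel

section Translation

variable {Q M : Type*} [Group Q] [AddGroup M]

def rightTranslationAut : Q →* MulAut (Multiplicative (Q → M)) where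
  toFun p := AddEquiv.toMultiplicative
    { toFun := fun F q => F (q * p)
      invFun := fun F q => F (q * p⁻¹)
      left_inv := fun F => by simp
      right_inv := fun F => by simp
      map_add' := fun _ _ => rfl }
  map_one' := by ext; simp
  map_mul' p p' := by ext; simp [mul_assoc]

lemma rightTranslationAut_apply (p : Q) (F : Multiplicative (Q → M)) (q : Q) :
    (rightTranslationAut p F).toAdd q = F.toAdd (q * p) :=
  rfl

def SemidirectProduct.liftCocycle {H : Type*} [Group H] (π : H →* Q) (c : Q → H → M)
    (hc : ∀ q h g, c q (h * g) = c q h + c (q * π h) g) :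
    H →* Multiplicative (Q → M) ⋊[rightTranslationAut] Q :=
  MonoidHom.mk' (fun h => ⟨Multiplicative.ofAdd fun q => c q h, π h⟩) fun h g => by
    ext
    · exact hc _ h g
    · exact map_mul π h g

end Translation

lemma SemidirectProduct.left_conj_of_right_eq_one {N G : Type*} [CommGroup N] [Group G]
    {φ : G →* MulAut N} (a : N ⋊[φ] G) {b : N ⋊[φ] G} (hb : b.right = 1) :
    (a * b * a⁻¹).left = φ a.right b.left := by
  simp [hb, mul_comm a.left]

namespace Monoid.CoprodI

open Abelianization IndRel

variable {ι : Type*} {Gi : ι → Type*} [∀ i, Group (Gi i)] (N : ∀ i, Subgroup (Gi i))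

abbrev fillingKernel : Subgroup (CoprodI Gi) :=
  Subgroup.normalClosure
    (⋃ i, (((N i).map (Monoid.CoprodI.of : Gi i →* Monoid.CoprodI Gi)) :
      Set (Monoid.CoprodI Gi)))

variable {N} in
lemma of_mem_fillingKernel {i : ι} {n : Gi i} (hn : n ∈ N i) : of n ∈ fillingKernel N :=
  Subgroup.subset_normalClosure (Set.mem_iUnion.2 ⟨i, n, hn, rfl⟩)

variable [∀ i, (N i).Normal]

lemma of_mem_fillingKernel_iff {i : ι} {g : Gi i} : of g ∈ fillingKernel N ↔ g ∈ N i := by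
  refine ⟨fun hg => ?_, of_mem_fillingKernel⟩
  let ρ : CoprodI Gi →* CoprodI fun j => Gi j ⧸ N j :=
    lift fun j => of.comp (QuotientGroup.mk' _)
  have hker : fillingKernel N ≤ ρ.ker := by
    refine Subgroup.normalClosure_le_normal (Set.iUnion_subset fun j => ?_)
    rintro _ ⟨n, hn, rfl⟩
    change of (M := fun j => Gi j ⧸ N j) (n : Gi j ⧸ N j) = 1
    rw [(QuotientGroup.eq_one_iff n).2 hn, map_one]
  have hρ : ρ (of g) = 1 := hker hg
  rwa [lift_of, MonoidHom.comp_apply, ← map_one (of (M := fun j => Gi j ⧸ N j) (i := i)),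
    (of_injective (M := fun j => Gi j ⧸ N j) i).eq_iff, QuotientGroup.mk'_apply,
    QuotientGroup.eq_one_iff] at hρ

lemma ker_mk_comp_of (i : ι) :
    ((QuotientGroup.mk' (fillingKernel N)).comp (of (M := Gi) (i := i))).ker = N i := by
  ext g
  simp [of_mem_fillingKernel_iff]

variable [DecidableEq ι]

abbrev IndSum :=
  ⨁ i, IndRel (CoprodI Gi ⧸ fillingKernel N) (Gi i) (N i)
    ((QuotientGroup.mk' (fillingKernel N)).comp of)

noncomputable def cocycleLift :
    CoprodI Gi →*
      Multiplicative (CoprodI Gi ⧸ fillingKernel N → IndSum N) ⋊[rightTranslationAut]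
        (CoprodI Gi ⧸ fillingKernel N) :=
  lift fun i => SemidirectProduct.liftCocycle ((QuotientGroup.mk' _).comp of)
    (fun q g => DirectSum.of _ i (cocycle (ker_mk_comp_of N i) q g))
    fun q h g => by rw [cocycle_mul, map_add]

lemma cocycleLift_of_left {i : ι} (g : Gi i) (q : CoprodI Gi ⧸ fillingKernel N) :
    (cocycleLift N (of g)).left.toAdd q =
      DirectSum.of _ i (cocycle (ker_mk_comp_of N i) q g) := by
  rw [cocycleLift, lift_of]
  rfl

lemma cocycleLift_right (g : CoprodI Gi) : (cocycleLift N g).right = g := by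
  suffices SemidirectProduct.rightHom.comp (cocycleLift N) = QuotientGroup.mk' _ from
    DFunLike.congr_fun this g
  refine ext_hom _ _ fun i => MonoidHom.ext fun g => ?_
  simp only [MonoidHom.comp_apply, cocycleLift, lift_of]
  rfl

lemma cocycleLift_right_eq_one {k : CoprodI Gi} (hk : k ∈ fillingKernel N) :
    (cocycleLift N k).right = 1 := by
  rw [cocycleLift_right]
  exact (QuotientGroup.eq_one_iff k).2 hk

noncomputable def fillingKernelToInd : fillingKernel N →* Multiplicative (IndSum N) :=
  MonoidHom.mk' (fun k => Multiplicative.ofAdd ((cocycleLift N k).left.toAdd 1)) fun a b => by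
    rw [Subgroup.coe_mul, map_mul, SemidirectProduct.mul_left,
      cocycleLift_right_eq_one N a.2, map_one]
    rfl

noncomputable def relToInd : Additive (Abelianization (fillingKernel N)) →+ IndSum N :=
  MonoidHom.toAdditiveLeft (Abelianization.lift (fillingKernelToInd N))

noncomputable def indToRel : IndSum N →+ Additive (Abelianization (fillingKernel N)) :=
  DirectSum.toAddMonoid fun i => toRel (f := of (M := Gi) (i := i)) fun _ => of_mem_fillingKernel

lemma relToInd_conjNormal (g : CoprodI Gi) {i : ι} (n : N i) :
    relToInd N (Additive.ofMul (conjNormal g (Abelianization.of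
        ((of (M := Gi)).restrictSubgroups (fun _ => of_mem_fillingKernel) n)))) =
      DirectSum.of _ i (IndRel.mk _ (g : CoprodI Gi ⧸ fillingKernel N) n) := by
  have hn : (cocycleLift N (of (n : Gi i))).right = 1 :=
    cocycleLift_right_eq_one N (of_mem_fillingKernel n.2)
  rw [map_of, relToInd, MonoidHom.coe_toAdditiveLeft]
  change ((cocycleLift N (g * of (n : Gi i) * g⁻¹)).left.toAdd 1) = _
  rw [map_mul, map_mul, map_inv, SemidirectProduct.left_conj_of_right_eq_one _ hn,
    rightTranslationAut_apply, one_mul, cocycleLift_right, cocycleLift_of_left, cocycle_of_mem]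

lemma relToInd_indToRel (x : IndSum N) : relToInd N (indToRel N x) = x := by
  suffices (relToInd N).comp (indToRel N) = AddMonoidHom.id _ from DFunLike.congr_fun this x
  refine DirectSum.addHom_ext' fun i => addHom_ext fun q n => ?_
  induction q using QuotientGroup.induction_on with | H g =>
  simp only [AddMonoidHom.comp_apply, indToRel, DirectSum.toAddMonoid_of, toRel_mk,
    relToInd_conjNormal]
  rfl

lemma indToRel_relToInd (x : Additive (Abelianization (fillingKernel N))) :
    indToRel N (relToInd N x) = x := by
  let F := MonoidHom.toAdditive.symm ((indToRel N).comp (relToInd N))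
  suffices F.comp Abelianization.of = Abelianization.of by
    rw [← MonoidHom.id_comp Abelianization.of] at this
    exact DFunLike.congr_fun (Abelianization.hom_ext _ _ this) x.toMul
  refine Subgroup.normalClosure_hom_ext fun c _ hx => ?_
  obtain ⟨i, n, hn, rfl⟩ := Set.mem_iUnion.1 hx
  have hmem : c * of n * c⁻¹ ∈ fillingKernel N :=
    Subgroup.normalClosure_normal.conj_mem _ (of_mem_fillingKernel hn) c
  have hk : Abelianization.of (⟨c * of n * c⁻¹, hmem⟩ : fillingKernel N) =
      conjNormal c (Abelianization.of
        ((of (M := Gi)).restrictSubgroups (fun _ => of_mem_fillingKernel) ⟨n, hn⟩)) := by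
    rw [map_of]
    rfl
  simp only [MonoidHom.comp_apply, hk, F]
  change (indToRel N (relToInd N (Additive.ofMul (conjNormal c _)))).toMul = _
  rw [relToInd_conjNormal, indToRel, DirectSum.toAddMonoid_of, toRel_mk]
  rfl

lemma indToRel_of_smul (g : CoprodI Gi) (x : IndSum N) :
    indToRel N (MonoidAlgebra.of ℤ (CoprodI Gi ⧸ fillingKernel N) g • x) =
      Additive.ofMul (conjNormal g (indToRel N x).toMul) := by
  suffices (indToRel N).comp (DistribSMul.toAddMonoidHom _
      (MonoidAlgebra.of ℤ (CoprodI Gi ⧸ fillingKernel N) g)) =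
      (conjNormal g).toAdditive.comp (indToRel N) from DFunLike.congr_fun this x
  refine DirectSum.addHom_ext fun i v => ?_
  simp only [AddMonoidHom.comp_apply, DistribSMul.toAddMonoidHom_apply, ← DirectSum.of_smul,
    indToRel, DirectSum.toAddMonoid_of, toRel_of_smul]
  rfl

noncomputable def relEquivInd : Additive (Abelianization (fillingKernel N)) ≃+ IndSum N :=
  AddMonoidHom.toAddEquiv (relToInd N) (indToRel N) (AddMonoidHom.ext (indToRel_relToInd N))
    (AddMonoidHom.ext (relToInd_indToRel N))

lemma relEquivInd_conjNormal (g : CoprodI Gi) (x : Additive (Abelianization (fillingKernel N))) :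
    relEquivInd N (Additive.ofMul (conjNormal g x.toMul)) =
      MonoidAlgebra.of ℤ (CoprodI Gi ⧸ fillingKernel N) g • relEquivInd N x := by
  refine (relEquivInd N).symm.injective ?_
  change indToRel N (relToInd N _) = indToRel N _
  rw [indToRel_of_smul, indToRel_relToInd]
  change _ = Additive.ofMul (conjNormal g (indToRel N (relToInd N x)).toMul)
  rw [indToRel_relToInd]

end Monoid.CoprodI

/-- **The relative relation module of a Dehn filling of a free product.**
Let `{Gi i}` be a family of groups and let `G = ∗ i, Gi i` be their free product, each
`Gi i` being regarded as a subgroup of `G` via the canonical embedding. Let `N i` be a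
normal subgroup of `Gi i` for each `i`, let `⟪N⟫` be the normal closure in `G` of the
union of (the images of) the `N i`, `Q = G/⟪N⟫` and `Q i = Gi i / N i`. Then
`Rel(G, ⟪N⟫) ≅ ⨁ i, ℤQ ⊗_{ℤQ i} Rel(Gi i, N i)` as `ℤQ`-modules. -/
theorem coprodI_relModule {ι : Type*} {Gi : ι → Type*} [∀ i, Group (Gi i)]
    (N : ∀ i, Subgroup (Gi i)) [∀ i, (N i).Normal] :
    RelModuleIsoIndFam (Monoid.CoprodI Gi)
      (fun i => (Monoid.CoprodI.of : Gi i →* Monoid.CoprodI Gi)) N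
      (Subgroup.normalClosure
        (⋃ i, (((N i).map (Monoid.CoprodI.of : Gi i →* Monoid.CoprodI Gi)) :
          Set (Monoid.CoprodI Gi)))) := by
  classical
  exact ⟨Monoid.CoprodI.relEquivInd N, Monoid.CoprodI.relEquivInd_conjNormal N⟩
end
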